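/- arXiv:1512.00266 — 3 statements merged into one kernel-verified Lean document; each statement's English description precedes it below -/
import Mathlib

section
/- Let T be a triangulated category with small coproducts and G a set of compact objects such that T equals the localizing subcategory generated by G. Suppose that for every A in G there exists an integer d_A \ge 0 such that Hom(A, B[n]) = 0 for all B in G and all n \ge d_A. Then the t-structure t(G) generated by G is non-degenerate: the intersection of all T_{\ge n} over n \in Z is zero, and the intersection of all T_{\le n} over n \in Z is zero. -/
/-!
STATEMENT 1: Non-degeneracy of the t-structure generated by a set of compact objects
generating the category as a localizing subcategory, under a uniform vanishing bound.
-/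

open CategoryTheory Limits Pretriangulated

universe v u

variable (C : Type u) [Category.{v} C] [Preadditive C] [HasZeroObject C]
  [HasShift C ℤ] [∀ n : ℤ, (CategoryTheory.shiftFunctor C n).Additive] [Pretriangulated C]
  [HasCoproducts.{v} C]

/-- The canonical comparison map `⨁ⱼ Hom(X, f j) →+ Hom(X, ∐ f)`. -/
noncomputable def coprodCompare (X : C) {J : Type v} [DecidableEq J] (f : J → C) :
    (DirectSum J (fun j => X ⟶ f j)) →+ (X ⟶ ∐ f) :=
  DirectSum.toAddMonoid fun j =>
    { toFun := fun g => g ≫ Sigma.ι f j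
      map_zero' := by simp
      map_add' := fun a b => by simp [Preadditive.add_comp] }

/-- `X` is compact: `Hom(X, -)` commutes with small coproducts. -/
def IsCompactObj (X : C) : Prop :=
  ∀ (J : Type v) (_ : DecidableEq J) (f : J → C),
    Function.Bijective (coprodCompare C X f)

variable {C}

/-- The smallest class of objects containing `G` and closed under extensions, the
shift `[1]` and small coproducts: the aisle of the generated t-structure. -/
inductive aisle (G : Set C) : C → Prop
  | of (X : C) : X ∈ G → aisle G X
  | shift (X : C) : aisle G X → aisle G (X⟦(1 : ℤ)⟧)
  | ext (T : Triangle C) : (T ∈ distTriang C) → aisle G T.obj₁ → aisle G T.obj₃ →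
      aisle G T.obj₂
  | coprod (J : Type v) (f : J → C) : (∀ j, aisle G (f j)) → aisle G (∐ f)

/-- `T_{<0}` : the objects `N` with `Hom(A, N[-n]) = 0` for all `A ∈ G` and `n ≥ 0`:
the coaisle of the generated t-structure. -/
def coaisle (G : Set C) : Set C :=
  {N | ∀ A ∈ G, ∀ n : ℤ, 0 ≤ n → ∀ f : A ⟶ N⟦(-n)⟧, f = 0}

/-- The localizing subcategory generated by `G` : the smallest triangulated
subcategory closed under small coproducts containing `G`. -/
inductive localizing (G : Set C) : C → Prop
  | of (X : C) : X ∈ G → localizing G X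
  | shift (X : C) (n : ℤ) : localizing G X → localizing G (X⟦n⟧)
  | ext (T : Triangle C) : (T ∈ distTriang C) → localizing G T.obj₁ → localizing G T.obj₂ →
      localizing G T.obj₃
  | coprod (J : Type v) (f : J → C) : (∀ j, localizing G (f j)) → localizing G (∐ f)

/-!
Both halves reduce to one detection principle: if `Hom(A, X⟦n⟧) = 0` for all `A ∈ G` and all
`n`, then `X = 0`, because the objects `Y` with `Hom(Y, X⟦n⟧) = 0` for all `n` form a localizing
subcategory containing `G`, hence contain `X`. On the coaisle side this vanishing is the
definition of `coaisle`. On the aisle side, fix `A ∈ G` with bound `d`: the objects `Y` with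
`Hom(A, Y⟦m⟧) = 0` for all `m ≥ d` contain `G` and are closed under `[1]`, extensions and (by
compactness of `A`) coproducts, so they contain the aisle, in particular `X⟦n - d⟧`.
-/

set_option linter.unusedSectionVars false

section

variable {G : Set C}

lemma hom_eq_zero_of_iso {A Y Z : C} (e : Y ≅ Z) (h : ∀ g : A ⟶ Y, g = 0) (f : A ⟶ Z) :
    f = 0 :=
  (Preadditive.IsIso.comp_right_eq_zero f e.inv).1 (h _)

lemma shift_hom_shift_eq_zero {X Y : C}
    (h : ∀ n : ℤ, ∀ g : Y ⟶ X⟦n⟧, g = 0) (m n : ℤ) (f : Y⟦m⟧ ⟶ X⟦n⟧) : f = 0 := by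
  rw [← Functor.map_eq_zero_iff (shiftFunctor C (-m))]
  apply (Preadditive.IsIso.comp_left_eq_zero (shiftShiftNeg Y m).inv _).1
  exact hom_eq_zero_of_iso ((shiftFunctorAdd C n (-m)).app X) (h _) _

lemma IsCompactObj.hom_sigma_eq_zero {A : C} (hA : IsCompactObj C A) {J : Type v} (f : J → C)
    (h : ∀ j, ∀ g : A ⟶ f j, g = 0) (g : A ⟶ ∐ f) : g = 0 := by
  classical
  obtain ⟨x, rfl⟩ := (hA J inferInstance f).2 g
  rw [show x = 0 from DFinsupp.ext fun j => h j (x j), map_zero]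

lemma localizing.hom_shift_eq_zero {X Y : C} (hY : localizing G Y)
    (h : ∀ A ∈ G, ∀ n : ℤ, ∀ f : A ⟶ X⟦n⟧, f = 0) : ∀ n : ℤ, ∀ f : Y ⟶ X⟦n⟧, f = 0 := by
  induction hY with
  | of Y hY => exact h Y hY
  | shift Y m _ ih => exact shift_hom_shift_eq_zero ih m
  | ext T hT _ _ ih₁ ih₂ =>
    intro n f
    obtain ⟨g, rfl⟩ := Triangle.yoneda_exact₃ T hT f (ih₂ n (T.mor₂ ≫ f))
    rw [shift_hom_shift_eq_zero ih₁ 1 n g, comp_zero]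
  | coprod J f _ ih =>
    exact fun n g => Sigma.hom_ext _ _ fun j => by simp [ih j n (Sigma.ι f j ≫ g)]

lemma isZero_of_forall_hom_shift_eq_zero (hgen : ∀ X : C, localizing G X) (X : C)
    (h : ∀ A ∈ G, ∀ n : ℤ, ∀ f : A ⟶ X⟦n⟧, f = 0) : IsZero X := by
  rw [IsZero.iff_id_eq_zero]
  exact hom_eq_zero_of_iso ((shiftFunctorZero C ℤ).app X) ((hgen X).hom_shift_eq_zero h 0) _

lemma aisle.hom_shift_eq_zero {A Y : C} (hY : aisle G Y) (hA : IsCompactObj C A) {d : ℤ}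
    (hd : ∀ B ∈ G, ∀ n : ℤ, d ≤ n → ∀ f : A ⟶ B⟦n⟧, f = 0) :
    ∀ m : ℤ, d ≤ m → ∀ f : A ⟶ Y⟦m⟧, f = 0 := by
  induction hY with
  | of Y hY => exact hd Y hY
  | shift Y _ ih =>
    exact fun m hm => hom_eq_zero_of_iso ((shiftFunctorAdd C 1 m).app Y) (ih (1 + m) (by omega))
  | ext T hT _ _ ih₁ ih₃ =>
    intro m hm f
    obtain ⟨g, rfl⟩ :=
      Triangle.coyoneda_exact₂ _ (Triangle.shift_distinguished T hT m) f (ih₃ m hm _)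
    rw [ih₁ m hm g]
    exact zero_comp
  | coprod J f _ ih =>
    intro m hm
    exact hom_eq_zero_of_iso (PreservesCoproduct.iso (shiftFunctor C m) f).symm
      (hA.hom_sigma_eq_zero _ fun j => ih j m hm)

end

/-- an object lying in all shifted aisles (resp. all shifted coaisles) of
the t-structure `t(G)` is zero. -/
theorem generated_tStructure_nonDegenerate (G : Set C)
    (hG : ∀ X ∈ G, IsCompactObj C X)
    (hgen : ∀ X : C, localizing G X)
    (hvanish : ∀ A ∈ G, ∃ d : ℤ, 0 ≤ d ∧ ∀ B ∈ G, ∀ n : ℤ, d ≤ n → ∀ f : A ⟶ B⟦n⟧, f = 0) :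
    (∀ X : C, (∀ n : ℤ, aisle G (X⟦n⟧)) → IsZero X) ∧
    (∀ X : C, (∀ n : ℤ, X⟦n⟧ ∈ coaisle G) → IsZero X) := by
  refine ⟨fun X hX => ?_, fun X hX => ?_⟩ <;>
    refine isZero_of_forall_hom_shift_eq_zero hgen X fun A hA n => ?_
  · obtain ⟨d, -, hd⟩ := hvanish A hA
    exact hom_eq_zero_of_iso ((shiftFunctorAdd' C (n - d) d n (by omega)).app X).symm
      ((hX (n - d)).hom_shift_eq_zero (hG A hA) hd d le_rfl)
  · exact hom_eq_zero_of_iso ((shiftFunctorZero C ℤ).app (X⟦n⟧)) (hX n A hA 0 le_rfl)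
end

section
/- Let f = (f_A, f_B) be a morphism of two-term complexes of abelian groups from (A_1 \xrightarrow{u_1} B_1) to (A_2 \xrightarrow{u_2} B_2), i.e. f_A : A_1 \to A_2 and f_B : B_1 \to B_2 satisfy u_2 \circ f_A = f_B \circ u_1. Then f is a quasi-isomorphism (i.e. the induced maps ker(u_1) \to ker(u_2) and coker(u_1) \to coker(u_2) are isomorphisms) if and only if the maps induced by u_1 and u_2 on kernels and cokernels of f, namely ker(f_A) \to ker(f_B) and coker(f_A) \to coker(f_B), are isomorphisms. -/
/-!
STATEMENT 9: A morphism of two-term complexes of abelian groups is a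
quasi-isomorphism iff the maps induced on the kernels and cokernels of its
components are isomorphisms (snake-lemma diagram chase).
-/

variable {A₁ B₁ A₂ B₂ : Type} [AddCommGroup A₁] [AddCommGroup B₁]
  [AddCommGroup A₂] [AddCommGroup B₂]
  (u₁ : A₁ →+ B₁) (u₂ : A₂ →+ B₂) (fA : A₁ →+ A₂) (fB : B₁ →+ B₂)

section Maps

variable (comm : u₂.comp fA = fB.comp u₁)

/-- The map `ker u₁ →+ ker u₂` induced by `f = (fA, fB)`. -/
def kerMapHoriz : u₁.ker →+ u₂.ker :=
  (fA.domRestrict u₁.ker).codRestrict u₂.ker (fun x => by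
    have h : u₂ (fA x.1) = fB (u₁ x.1) := congrFun (congrArg DFunLike.coe comm) x.1
    have hx : u₁ x.1 = 0 := x.2
    simp [AddMonoidHom.mem_ker, h, hx])

/-- The map `coker u₁ →+ coker u₂` induced by `f = (fA, fB)`. -/
def cokerMapHoriz : B₁ ⧸ u₁.range →+ B₂ ⧸ u₂.range :=
  QuotientAddGroup.map u₁.range u₂.range fB (by
    rintro b ⟨a, rfl⟩
    have h : u₂ (fA a) = fB (u₁ a) := congrFun (congrArg DFunLike.coe comm) a
    exact ⟨fA a, h⟩)

/-- The map `ker fA →+ ker fB` induced by `u = (u₁, u₂)`. -/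
def kerMapVert : fA.ker →+ fB.ker :=
  (u₁.domRestrict fA.ker).codRestrict fB.ker (fun x => by
    have h : u₂ (fA x.1) = fB (u₁ x.1) := congrFun (congrArg DFunLike.coe comm) x.1
    have hx : fA x.1 = 0 := x.2
    simp [AddMonoidHom.mem_ker, ← h, hx])

/-- The map `coker fA →+ coker fB` induced by `u = (u₁, u₂)`. -/
def cokerMapVert : A₂ ⧸ fA.range →+ B₂ ⧸ fB.range :=
  QuotientAddGroup.map fA.range fB.range u₂ (by
    rintro a ⟨x, rfl⟩
    have h : u₂ (fA x) = fB (u₁ x) := congrFun (congrArg DFunLike.coe comm) x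
    exact ⟨u₁ x, h.symm⟩)

end Maps

/-! The horizontal and vertical maps on kernels both have kernel `ker u₁ ⊓ ker fA`, and the maps
on cokernels both have cokernel `B₂ ⧸ (range u₂ ⊔ range fB)`, so injectivity on kernels and
surjectivity on cokernels pass between the two directions for free. The remaining two properties
are diagram chases that use exactly surjectivity on kernels and injectivity on cokernels. -/

section Chase

variable {u₁ u₂ fA fB}

lemma comm_apply (comm : u₂.comp fA = fB.comp u₁) (a : A₁) : u₂ (fA a) = fB (u₁ a) :=
  DFunLike.congr_fun comm a

variable (comm : u₂.comp fA = fB.comp u₁)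

@[simp]
lemma coe_kerMapVert (x : fA.ker) : (kerMapVert u₁ u₂ fA fB comm x : B₁) = u₁ x := rfl

lemma mem_range_of_injective_cokerMapHoriz
    (h : Function.Injective (cokerMapHoriz u₁ u₂ fA fB comm)) {b : B₁}
    (hb : fB b ∈ u₂.range) : b ∈ u₁.range := by
  rw [← QuotientAddGroup.eq_zero_iff] at hb ⊢
  exact (injective_iff_map_eq_zero _).1 h _ hb

lemma exists_eq_of_surjective_kerMapHoriz
    (h : Function.Surjective (kerMapHoriz u₁ u₂ fA fB comm)) {a : A₂} (ha : u₂ a = 0) :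
    ∃ k, u₁ k = 0 ∧ fA k = a := by
  obtain ⟨⟨k, hk⟩, hka⟩ := h ⟨a, ha⟩
  exact ⟨k, hk, congrArg Subtype.val hka⟩

lemma kerMapVert_injective (h : Function.Injective (kerMapHoriz u₁ u₂ fA fB comm)) :
    Function.Injective (kerMapVert u₁ u₂ fA fB comm) := by
  rw [injective_iff_map_eq_zero]
  rintro ⟨x, hfx⟩ hux
  have hx : (⟨x, congrArg Subtype.val hux⟩ : u₁.ker) = 0 :=
    (injective_iff_map_eq_zero _).1 h _ (Subtype.ext hfx)
  simpa using congrArg Subtype.val hx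

lemma cokerMapVert_surjective (h : Function.Surjective (cokerMapHoriz u₁ u₂ fA fB comm)) :
    Function.Surjective (cokerMapVert u₁ u₂ fA fB comm) := by
  intro q
  induction q using QuotientAddGroup.induction_on with | H b₂ => ?_
  obtain ⟨q₁, hq₁⟩ := h b₂
  induction q₁ using QuotientAddGroup.induction_on with | H b₁ => ?_
  obtain ⟨a₂, ha₂⟩ := QuotientAddGroup.eq.1 hq₁
  refine ⟨a₂, QuotientAddGroup.eq.2 ⟨b₁, ?_⟩⟩
  rw [ha₂]
  abel

lemma kerMapVert_surjective (hker : Function.Surjective (kerMapHoriz u₁ u₂ fA fB comm))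
    (hcoker : Function.Injective (cokerMapHoriz u₁ u₂ fA fB comm)) :
    Function.Surjective (kerMapVert u₁ u₂ fA fB comm) := by
  rintro ⟨b, hb : fB b = 0⟩
  obtain ⟨a, rfl⟩ := mem_range_of_injective_cokerMapHoriz comm hcoker (hb ▸ zero_mem _)
  have hua : u₂ (fA a) = 0 := (comm_apply comm a).trans hb
  obtain ⟨k, hk, hfk⟩ := exists_eq_of_surjective_kerMapHoriz comm hker hua
  refine ⟨⟨a - k, by simp [hfk]⟩, Subtype.ext ?_⟩
  simp [hk]

lemma cokerMapVert_injective (hker : Function.Surjective (kerMapHoriz u₁ u₂ fA fB comm))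
    (hcoker : Function.Injective (cokerMapHoriz u₁ u₂ fA fB comm)) :
    Function.Injective (cokerMapVert u₁ u₂ fA fB comm) := by
  rw [injective_iff_map_eq_zero]
  intro q
  induction q using QuotientAddGroup.induction_on with | H a₂ => ?_
  intro h
  obtain ⟨b, hb⟩ := (QuotientAddGroup.eq_zero_iff _).1 h
  obtain ⟨a₁, rfl⟩ := mem_range_of_injective_cokerMapHoriz comm hcoker ⟨a₂, hb.symm⟩
  have hu : u₂ (a₂ - fA a₁) = 0 := by
    rw [map_sub, comm_apply comm a₁, hb]
    exact sub_self _
  obtain ⟨k, -, hfk⟩ := exists_eq_of_surjective_kerMapHoriz comm hker hu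
  exact (QuotientAddGroup.eq_zero_iff a₂).2 ⟨a₁ + k, by simp [hfk]⟩

lemma bijective_vert_of_bijective_horiz
    (hker : Function.Bijective (kerMapHoriz u₁ u₂ fA fB comm))
    (hcoker : Function.Bijective (cokerMapHoriz u₁ u₂ fA fB comm)) :
    Function.Bijective (kerMapVert u₁ u₂ fA fB comm) ∧
      Function.Bijective (cokerMapVert u₁ u₂ fA fB comm) :=
  ⟨⟨kerMapVert_injective comm hker.1, kerMapVert_surjective comm hker.2 hcoker.1⟩,
    ⟨cokerMapVert_injective comm hker.2 hcoker.1, cokerMapVert_surjective comm hcoker.2⟩⟩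

end Chase

theorem quasiIso_iff_ker_coker (comm : u₂.comp fA = fB.comp u₁) :
    (Function.Bijective (kerMapHoriz u₁ u₂ fA fB comm) ∧
      Function.Bijective (cokerMapHoriz u₁ u₂ fA fB comm)) ↔
    (Function.Bijective (kerMapVert u₁ u₂ fA fB comm) ∧
      Function.Bijective (cokerMapVert u₁ u₂ fA fB comm)) :=
  -- Transposing the square swaps the horizontal and vertical maps, definitionally.
  ⟨fun ⟨hker, hcoker⟩ => bijective_vert_of_bijective_horiz comm hker hcoker,
    fun ⟨hker, hcoker⟩ => bijective_vert_of_bijective_horiz comm.symm hker hcoker⟩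
end

section
/- Let k be a field and G a commutative group scheme of finite type over k. Let A be an abelian subvariety of G which equals the underlying reduced subscheme of the identity component of G. Suppose there is an exact sequence of commutative group schemes 0 \to B \to G \to F \to 0 with B an abelian variety and F a finite group scheme over k. Then A = B as subgroup schemes of G. -/
/-!
`B ⊆ A` is the maximality of `A`, as `B` is connected and reduced. For `A ⊆ B` the composite
`A → G → F` must vanish. Its underlying morphism `A → F` and the unit section `A → Spec k → F`
agree at the unit point of `A`, and two `k`-morphisms from a connected reduced scheme to a finite
`k`-scheme that agree at one point are equal: on global sections their difference `d` is integral
over `k` and killed by evaluation at the point, and since `Γ(A)` has no nontrivial idempotents,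
Fitting's lemma in the Artinian ring `k[d]` makes `d` a unit or nilpotent, hence `d = 0`.
-/

open AlgebraicGeometry CategoryTheory Limits

/-- The set of `t`-points of `π : X ⟶ S`, for `t : T ⟶ S`. -/
abbrev sections {X S T : Scheme} (π : X ⟶ S) (t : T ⟶ S) : Type :=
  {f : T ⟶ X // f ≫ π = t}

/-- Restriction of a `t`-point along `c : T' ⟶ T`. -/
def pullSection {X S T T' : Scheme} {π : X ⟶ S} {t : T ⟶ S} (c : T' ⟶ T)
    (a : sections π t) : sections π (c ≫ t) :=
  ⟨c ≫ a.val, by rw [Category.assoc, a.2]⟩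

/-- A commutative group scheme over `S`: a scheme `X/S` with a commutative group
structure on its functor of points. -/
structure CommGroupSchemeOver (S : Scheme) where
  X : Scheme
  π : X ⟶ S
  grp : ∀ {T : Scheme} (t : T ⟶ S), CommGroup (sections π t)
  naturality_mul : ∀ {T T' : Scheme} (c : T' ⟶ T) (t : T ⟶ S) (a b : sections π t),
    letI := grp (c ≫ t)
    letI := grp t
    pullSection c (a * b) = pullSection c a * pullSection c b

instance {S : Scheme} (G : CommGroupSchemeOver S) {T : Scheme} (t : T ⟶ S) :
    CommGroup (sections G.π t) := G.grp t

/-- A homomorphism of commutative group schemes over `S`. -/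
structure GroupSchemeHom {S : Scheme} (G H : CommGroupSchemeOver S) where
  hom : G.X ⟶ H.X
  w : hom ≫ H.π = G.π
  map_mul : ∀ {T : Scheme} (t : T ⟶ S) (a b : sections G.π t),
    (⟨(a * b).val ≫ hom, by rw [Category.assoc, w, (a * b).2]⟩ : sections H.π t) =
      (⟨a.val ≫ hom, by rw [Category.assoc, w, a.2]⟩ : sections H.π t) *
        (⟨b.val ≫ hom, by rw [Category.assoc, w, b.2]⟩ : sections H.π t)

/-- Pushforward of points along a homomorphism. -/
def GroupSchemeHom.push {S : Scheme} {G H : CommGroupSchemeOver S}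
    (φ : GroupSchemeHom G H) {T : Scheme} {t : T ⟶ S} (a : sections G.π t) :
    sections H.π t :=
  ⟨a.val ≫ φ.hom, by rw [Category.assoc, φ.w, a.2]⟩

/-- A subgroup scheme: a closed immersion of group schemes. -/
structure SubgroupScheme {S : Scheme} (G : CommGroupSchemeOver S) where
  grp : CommGroupSchemeOver S
  ι : GroupSchemeHom grp G
  closed : IsClosedImmersion ι.hom
  inj : ∀ {T : Scheme} (t : T ⟶ S),
    Function.Injective (fun a : sections grp.π t => ι.push a)

/-- The image of a subgroup scheme on `t`-points. -/
def SubgroupScheme.image {S : Scheme} {G : CommGroupSchemeOver S}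
    (A : SubgroupScheme G) {T : Scheme} (t : T ⟶ S) : Set (sections G.π t) :=
  Set.range (fun a : sections A.grp.π t => A.ι.push a)

/-- A flat morphism of schemes: all induced maps on stalks are flat. -/
def FlatMorphism {X Y : Scheme} (f : X ⟶ Y) : Prop :=
  ∀ x : X, RingHom.Flat (f.stalkMap x).hom

namespace IsArtinianRing

theorem isUnit_or_isNilpotent_of_forall_isIdempotentElem {R : Type*} [CommRing R]
    [IsArtinianRing R] (hR : ∀ e : R, IsIdempotentElem e → e = 0 ∨ e = 1) (a : R) :
    IsUnit a ∨ IsNilpotent a := by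
  obtain ⟨n, y, hy⟩ := IsArtinian.exists_pow_succ_smul_dvd a (1 : R)
  replace hy : a ^ (n + 1) * y = a ^ n := by simpa using hy
  have hfix : ∀ j, a ^ n * (a * y) ^ j = a ^ n := by
    intro j
    induction j with
    | zero => simp
    | succ j ih =>
      calc a ^ n * (a * y) ^ (j + 1) = a ^ n * (a * y) ^ j * (a * y) := by ring
        _ = a ^ (n + 1) * y := by rw [ih]; ring
        _ = a ^ n := hy
  -- Fitting's idempotent: `a` is invertible on `e R` and nilpotent on `(1 - e) R`.
  have he : IsIdempotentElem ((a * y) ^ (n + 1)) := by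
    calc (a * y) ^ (n + 1) * (a * y) ^ (n + 1)
        = a ^ n * (a * y) ^ (n + 1) * (a * y ^ (n + 1)) := by ring
      _ = (a * y) ^ (n + 1) := by rw [hfix]; ring
  rcases hR _ he with h0 | h1
  · exact .inr ⟨n, by rw [← hfix (n + 1), h0, mul_zero]⟩
  · exact .inl (IsUnit.of_mul_eq_one (y * (a * y) ^ n) (by rw [← h1]; ring))

theorem isUnit_or_eq_zero_of_isIntegral {R S : Type*} [CommRing R] [IsArtinianRing R]
    [CommRing S] [Algebra R S] [IsReduced S]
    (hS : ∀ e : S, IsIdempotentElem e → e = 0 ∨ e = 1) {a : S} (ha : IsIntegral R a) :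
    IsUnit a ∨ a = 0 := by
  let B := Algebra.adjoin R {a}
  have : Module.Finite R B := Algebra.finite_adjoin_simple_of_isIntegral ha
  have : IsArtinianRing B := isArtinian_of_tower R inferInstance
  have hB (e : B) (he : IsIdempotentElem e) : e = 0 ∨ e = 1 :=
    (hS e (he.map B.val)).imp Subtype.ext Subtype.ext
  rcases isUnit_or_isNilpotent_of_forall_isIdempotentElem hB
    ⟨a, Algebra.self_mem_adjoin_singleton R a⟩ with h | h
  · exact .inl (h.map B.val)
  · exact .inr (h.map B.val).eq_zero

end IsArtinianRing

namespace AlgebraicGeometry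

theorem Scheme.eq_zero_or_one_of_isIdempotentElem {X : Scheme} [PreconnectedSpace X]
    [IsReduced X] {e : Γ(X, ⊤)} (he : IsIdempotentElem e) : e = 0 ∨ e = 1 := by
  have hclopen : IsClopen (X.basicOpen e : Set X) := by
    rw [← X.toSpecΓ_preimage_basicOpen]
    exact (PrimeSpectrum.isClopen_iff.mpr ⟨e, he, rfl⟩).preimage X.toSpecΓ.continuous
  have hdisj : X.basicOpen e ⊓ X.basicOpen (1 - e) = ⊥ := by
    rw [← Scheme.basicOpen_mul, mul_sub, mul_one, he.eq, sub_self, Scheme.basicOpen_zero]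
  rcases isClopen_iff.mp hclopen with h | h
  · exact .inl ((basicOpen_eq_bot_iff e).mp (TopologicalSpace.Opens.coe_eq_empty.mp h))
  · have : X.basicOpen e = ⊤ := TopologicalSpace.Opens.coe_eq_univ.mp h
    rw [this, top_inf_eq, basicOpen_eq_bot_iff, sub_eq_zero] at hdisj
    exact .inr hdisj.symm

theorem Scheme.Hom.ext_of_isFinite {R : CommRingCat} [IsArtinianRing R] {X Y T : Scheme}
    [PreconnectedSpace X] [IsReduced X] [Nonempty T] {πX : X ⟶ Spec R} {πY : Y ⟶ Spec R}
    [IsFinite πY] {f g : X ⟶ Y} (hf : f ≫ πY = πX) (hg : g ≫ πY = πX) (x : T ⟶ X)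
    (hx : x ≫ f = x ≫ g) : f = g := by
  have : IsAffine Y := isAffine_of_isAffineHom πY
  have : IsArtinianRing Γ(Spec R, ⊤) :=
    (Scheme.ΓSpecIso R).commRingCatIsoToRingEquiv.symm.isArtinianRing
  let _ : Algebra Γ(Spec R, ⊤) Γ(X, ⊤) := πX.appTop.hom.toAlgebra
  let _ : Algebra Γ(Spec R, ⊤) Γ(Y, ⊤) := πY.appTop.hom.toAlgebra
  have : Module.Finite Γ(Spec R, ⊤) Γ(Y, ⊤) := πY.finite_appTop
  have isIntegral_appTop {h : X ⟶ Y} (hh : h ≫ πY = πX) (r : Γ(Y, ⊤)) :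
      _root_.IsIntegral Γ(Spec R, ⊤) (h.appTop r) :=
    (IsIntegral.of_finite _ r).map_of_comp_eq (RingHom.id _) h.appTop.hom <| by
      change πX.appTop.hom.comp (RingHom.id _) = h.appTop.hom.comp πY.appTop.hom
      rw [← hh, Scheme.Hom.comp_appTop]
      rfl
  refine ext_of_isAffine (CommRingCat.hom_ext (RingHom.ext fun r => sub_eq_zero.mp ?_))
  have hvanish : x.appTop (f.appTop r - g.appTop r) = 0 := by
    rw [map_sub, sub_eq_zero, ← CommRingCat.comp_apply, ← CommRingCat.comp_apply,
      ← Scheme.Hom.comp_appTop, ← Scheme.Hom.comp_appTop, hx]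
  refine (IsArtinianRing.isUnit_or_eq_zero_of_isIntegral
    (fun _ => Scheme.eq_zero_or_one_of_isIdempotentElem)
    ((isIntegral_appTop hf r).sub (isIntegral_appTop hg r))).resolve_left fun hu => ?_
  have : Nonempty (⊤ : T.Opens) := ⟨⟨Classical.arbitrary T, trivial⟩⟩
  have := hu.map x.appTop.hom
  rw [hvanish] at this
  exact not_isUnit_zero this

end AlgebraicGeometry

theorem CommGroupSchemeOver.comp_one_val {S : Scheme} (H : CommGroupSchemeOver S)
    {T T' : Scheme} {t : T ⟶ S} {t' : T' ⟶ S} (c : T' ⟶ T) (h : c ≫ t = t') :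
    c ≫ (1 : sections H.π t).val = (1 : sections H.π t').val := by
  subst h
  have hmul := H.naturality_mul c t 1 1
  rw [mul_one] at hmul
  exact congrArg Subtype.val (left_eq_mul.mp hmul)

namespace GroupSchemeHom

variable {S : Scheme} {G H K : CommGroupSchemeOver S}

theorem push_mul (φ : GroupSchemeHom G H) {T : Scheme} {t : T ⟶ S} (a b : sections G.π t) :
    φ.push (a * b) = φ.push a * φ.push b :=
  φ.map_mul t a b

theorem push_one (φ : GroupSchemeHom G H) {T : Scheme} (t : T ⟶ S) :
    φ.push (1 : sections G.π t) = 1 := by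
  have h := φ.push_mul (1 : sections G.π t) 1
  rw [mul_one] at h
  exact left_eq_mul.mp h

def comp (φ : GroupSchemeHom H K) (ψ : GroupSchemeHom G H) : GroupSchemeHom G K where
  hom := ψ.hom ≫ φ.hom
  w := by rw [Category.assoc, φ.w, ψ.w]
  map_mul t a b := by
    have h := congrArg φ.push (ψ.push_mul a b)
    rw [φ.push_mul] at h
    simpa only [push, Subtype.ext_iff, Category.assoc] using h

theorem push_comp (φ : GroupSchemeHom H K) (ψ : GroupSchemeHom G H) {T : Scheme}
    {t : T ⟶ S} (a : sections G.π t) : (φ.comp ψ).push a = φ.push (ψ.push a) :=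
  Subtype.ext (Category.assoc _ _ _).symm

section FiniteTarget

variable {R : CommRingCat} [IsArtinianRing R] {H F : CommGroupSchemeOver (Spec R)}
  [ConnectedSpace H.X] [IsReduced H.X] [IsFinite F.π]

theorem hom_eq_one_val (φ : GroupSchemeHom H F) : φ.hom = (1 : sections F.π H.π).val := by
  let e : H.X ⟶ H.X := (1 : sections H.π H.π).val
  refine Scheme.Hom.ext_of_isFinite φ.w (1 : sections F.π H.π).2 e ?_
  calc e ≫ φ.hom = (φ.push (1 : sections H.π H.π)).val := rfl
    _ = (1 : sections F.π H.π).val := by rw [φ.push_one]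
    _ = e ≫ (1 : sections F.π H.π).val := (F.comp_one_val e (1 : sections H.π H.π).2).symm

theorem push_eq_one (φ : GroupSchemeHom H F) {T : Scheme} {t : T ⟶ Spec R}
    (a : sections H.π t) : φ.push a = 1 :=
  Subtype.ext <| (congrArg (a.val ≫ ·) φ.hom_eq_one_val).trans (F.comp_one_val a.val a.2)

end FiniteTarget

end GroupSchemeHom

theorem abelian_subvariety_eq_of_exact_sequence_general
    (k : Type) [Field k]
    (G : CommGroupSchemeOver (Spec (CommRingCat.of k)))
    (A B : SubgroupScheme G)
    -- `A` is an abelian variety: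
    (hA_conn : ConnectedSpace ↥A.grp.X) (hA_red : IsReduced A.grp.X)
    -- `A` is the underlying reduced subscheme of the identity component of `G`:
    -- every connected reduced subgroup scheme of `G` is contained in `A`
    (hA_max : ∀ C : SubgroupScheme G, IsReduced C.grp.X → ConnectedSpace ↥C.grp.X →
      ∀ (T : Scheme) (t : T ⟶ Spec (CommRingCat.of k)), C.image t ⊆ A.image t)
    -- `B` is an abelian variety:
    (hB_conn : ConnectedSpace ↥B.grp.X) (hB_red : IsReduced B.grp.X)
    -- the exact sequence `0 → B → G → F → 0` with `F` finite:
    (F : CommGroupSchemeOver (Spec (CommRingCat.of k))) (hF : IsFinite F.π)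
    (p : GroupSchemeHom G F)
    -- exactness in the middle: `B` is the kernel of `p`
    (hker : ∀ (T : Scheme) (t : T ⟶ Spec (CommRingCat.of k)),
      B.image t = {a : sections G.π t | p.push a = 1}) :
    -- conclusion: `A = B` as subgroup schemes of `G`
    ∀ (T : Scheme) (t : T ⟶ Spec (CommRingCat.of k)), A.image t = B.image t := by
  intro T t
  refine Set.Subset.antisymm ?_ (hA_max B hB_red hB_conn T t)
  rintro _ ⟨a, rfl⟩
  rw [hker]
  exact (p.push_comp A.ι a).symm.trans ((p.comp A.ι).push_eq_one a)

theorem abelian_subvariety_eq_of_exact_sequence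
    (k : Type) [Field k]
    (G : CommGroupSchemeOver (Spec (CommRingCat.of k)))
    (hGft : LocallyOfFiniteType G.π) (hGqc : QuasiCompact G.π)
    (A B : SubgroupScheme G)
    -- `A` is an abelian variety:
    (hA_smooth : IsSmooth A.grp.π) (hA_proper : IsProper A.grp.π)
    (hA_conn : ConnectedSpace ↥A.grp.X) (hA_red : IsReduced A.grp.X)
    -- `A` is the underlying reduced subscheme of the identity component of `G`:
    -- every connected reduced subgroup scheme of `G` is contained in `A`
    (hA_max : ∀ C : SubgroupScheme G, IsReduced C.grp.X → ConnectedSpace ↥C.grp.X →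
      ∀ (T : Scheme) (t : T ⟶ Spec (CommRingCat.of k)), C.image t ⊆ A.image t)
    -- `B` is an abelian variety:
    (hB_smooth : IsSmooth B.grp.π) (hB_proper : IsProper B.grp.π)
    (hB_conn : ConnectedSpace ↥B.grp.X) (hB_red : IsReduced B.grp.X)
    -- the exact sequence `0 → B → G → F → 0` with `F` finite:
    (F : CommGroupSchemeOver (Spec (CommRingCat.of k))) (hF : IsFinite F.π)
    (p : GroupSchemeHom G F)
    -- exactness in the middle: `B` is the kernel of `p`
    (hker : ∀ (T : Scheme) (t : T ⟶ Spec (CommRingCat.of k)),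
      B.image t = {a : sections G.π t | p.push a = 1})
    -- exactness on the right: `p` is surjective as a map of fppf sheaves
    (hsurj : ∀ (T : Scheme) (t : T ⟶ Spec (CommRingCat.of k)) (y : sections F.π t),
      ∃ (T' : Scheme) (c : T' ⟶ T), FlatMorphism c ∧ LocallyOfFinitePresentation c ∧
        Function.Surjective c.base ∧
        ∃ x : sections G.π (c ≫ t), p.push x = pullSection c y) :
    -- conclusion: `A = B` as subgroup schemes of `G`
    ∀ (T : Scheme) (t : T ⟶ Spec (CommRingCat.of k)), A.image t = B.image t :=
  abelian_subvariety_eq_of_exact_sequence_general k G A B hA_conn hA_red hA_max hB_conn hB_red F hF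
    p hker
end
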